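/- Let N ≥ 1, let P : ℝ → SO(N) (so Pᵀ(y)P(y) = I for all y), let ε : ℝ → ℝ^{N×N}, let Ω : ℝ×ℝ → ℝ^{N×N}, and set A(x) := (I+ε(x))P(x). Then for all x ≠ y the following matrix identity holds: A(x)Ω(x,y) − d_{1/2}A(x,y) = −(I+ε(x)) Ω^P(x,y) P(y) − d_{1/2}ε(x,y) P(y) + R_ε(x,y), where Ω^P(x,y) := ½ ( d_{1/2}P(x,y)(Pᵀ(y)+Pᵀ(x)) − P(x)Ω(x,y)Pᵀ(y) − P(y)Ω(x,y)Pᵀ(x) ) and R_ε(x,y) := ½ (I+ε(x)) [ (P(x)−P(y))(Pᵀ(x)−Pᵀ(y))/|x−y|^{1/2} − P(x)Ω(x,y)(Pᵀ(x)−Pᵀ(y)) + (P(x)−P(y))Ω(x,y)Pᵀ(x) ] P(y). -/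
import Mathlib


open MeasureTheory Matrix Filter
open scoped ENNReal

/-- Squared Frobenius size of a matrix (entrywise sum of squares). -/
noncomputable def frob2 {N : ℕ} (M : Matrix (Fin N) (Fin N) ℝ) : ℝ := ∑ i, ∑ j, (M i j)^2

/-- `L²(Λ¹_od ℝ)` norm of a matrix-valued nonlocal vector field (entrywise). -/
noncomputable def nlNorm {N : ℕ} (Ω : ℝ → ℝ → Matrix (Fin N) (Fin N) ℝ) : ℝ≥0∞ :=
  (∫⁻ x : ℝ, ∫⁻ y : ℝ, ENNReal.ofReal (frob2 (Ω x y) / |x - y|)) ^ (1/2 : ℝ)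

/-- Gagliardo `W^{1/2,2}` seminorm of a matrix-valued map (entrywise). -/
noncomputable def gagM {N : ℕ} (A : ℝ → Matrix (Fin N) (Fin N) ℝ) : ℝ≥0∞ :=
  (∫⁻ x : ℝ, ∫⁻ y : ℝ, ENNReal.ofReal (frob2 (A x - A y) / |x - y|^2)) ^ (1/2 : ℝ)

/-- Gagliardo `W^{1/2,2}` seminorm of an `ℝ^N`-valued map (componentwise). -/
noncomputable def gagV {N : ℕ} (u : ℝ → Fin N → ℝ) : ℝ≥0∞ :=
  (∫⁻ x : ℝ, ∫⁻ y : ℝ, ENNReal.ofReal ((∑ i, (u x i - u y i)^2) / |x - y|^2)) ^ (1/2 : ℝ)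

/-- The gauged potential `Ω^P` of Mazowiecka–Schikorra. -/
noncomputable def OmegaP {N : ℕ} (P : ℝ → Matrix (Fin N) (Fin N) ℝ)
    (Ω : ℝ → ℝ → Matrix (Fin N) (Fin N) ℝ) (x y : ℝ) : Matrix (Fin N) (Fin N) ℝ :=
  (2:ℝ)⁻¹ • ((|x - y| ^ ((1:ℝ)/2))⁻¹ • (P x - P y) * ((P y)ᵀ + (P x)ᵀ)
    - P x * Ω x y * (P y)ᵀ - P y * Ω x y * (P x)ᵀ)

/-- The remainder term `R_ε`. -/
noncomputable def Reps {N : ℕ} (P : ℝ → Matrix (Fin N) (Fin N) ℝ)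
    (ε : ℝ → Matrix (Fin N) (Fin N) ℝ)
    (Ω : ℝ → ℝ → Matrix (Fin N) (Fin N) ℝ) (x y : ℝ) : Matrix (Fin N) (Fin N) ℝ :=
  (2:ℝ)⁻¹ • ((1 + ε x) *
    ((|x - y| ^ ((1:ℝ)/2))⁻¹ • ((P x - P y) * ((P x)ᵀ - (P y)ᵀ))
      - P x * Ω x y * ((P x)ᵀ - (P y)ᵀ)
      + (P x - P y) * Ω x y * (P x)ᵀ) * P y)

lemma key_abstract {N : ℕ} (a b e f w : Matrix (Fin N) (Fin N) ℝ) (c : ℝ)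
    (hb : bᵀ * b = 1) :
    ((1 + e) * a) * w - c • ((1 + e) * a - (1 + f) * b)
      = -((1 + e) * ((2:ℝ)⁻¹ • (c • (a - b) * (bᵀ + aᵀ) - a * w * bᵀ - b * w * aᵀ)) * b)
        - (c • (e - f)) * b
        + (2:ℝ)⁻¹ • ((1 + e) *
            (c • ((a - b) * (aᵀ - bᵀ)) - a * w * (aᵀ - bᵀ) + (a - b) * w * aᵀ) * b) := by
  simp only [mul_add, add_mul, sub_mul, mul_sub, smul_mul_assoc, mul_smul_comm,
    smul_sub, smul_add, Matrix.mul_assoc, one_mul, mul_one, neg_sub, neg_add, neg_neg, smul_smul]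
  simp only [hb, mul_one]
  module

/-- Algebraic rewriting of `AΩ - d_{1/2}A` for `A = (I+ε)P` (Lemma 3.1). -/
theorem stmt9 (N : ℕ) (hN : 1 ≤ N)
    (P : ℝ → Matrix (Fin N) (Fin N) ℝ)
    (hP : ∀ x, (P x)ᵀ * P x = 1)
    (ε : ℝ → Matrix (Fin N) (Fin N) ℝ)
    (Ω : ℝ → ℝ → Matrix (Fin N) (Fin N) ℝ) :
    ∀ x y : ℝ, x ≠ y →
      ((1 + ε x) * P x) * Ω x y
          - (|x - y| ^ ((1:ℝ)/2))⁻¹ • ((1 + ε x) * P x - (1 + ε y) * P y)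
        = -((1 + ε x) * OmegaP P Ω x y * P y)
            - ((|x - y| ^ ((1:ℝ)/2))⁻¹ • (ε x - ε y)) * P y
            + Reps P ε Ω x y := by
  intro x y _
  rw [OmegaP, Reps]
  exact key_abstract (P x) (P y) (ε x) (ε y) (Ω x y) ((|x - y| ^ ((1:ℝ)/2))⁻¹) (hP y)
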